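/- arXiv:1107.4581 — 5 statements merged into one kernel-verified Lean document; each statement's English description precedes it below -/
import Mathlib

section
/- Let W = U' ⊕ U'' be a direct sum decomposition of a vector space over F_q, and let V₁, V₂ ⊆ W be finite-dimensional subspaces. Then the subspace distance satisfies D(V₁|_{U'}, V₂|_{U'}) ≤ D(V₁, V₂), where V|_{U'} denotes the projection of V onto U' along U''. In other words, projections do not increase the subspace distance. -/
/-- The subspace distance `D(A,B) = dim A + dim B - 2 dim (A ∩ B)` (as an integer). -/
noncomputable def sdist {K W : Type*} [Field K] [AddCommGroup W] [Module K W]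
    (A B : Submodule K W) : ℤ :=
  (Module.finrank K A : ℤ) + (Module.finrank K B : ℤ)
    - 2 * (Module.finrank K ↥(A ⊓ B) : ℤ)

/-!
The inequality holds for every linear map `f`, not only for projections. By rank–nullity,
`f` lowers the dimension of `V` by `dim (V ⊓ ker f)`. Since `f (V₁ ⊓ V₂) ≤ f V₁ ⊓ f V₂`,
`D (f V₁) (f V₂)` is at most `D V₁ V₂` minus
`dim (V₁ ⊓ ker f) + dim (V₂ ⊓ ker f) - 2 dim (V₁ ⊓ V₂ ⊓ ker f)`, which is nonnegative by
monotonicity of `finrank`.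
-/

open Module Submodule LinearMap

section

variable {K W W₂ : Type*} [Field K] [AddCommGroup W] [Module K W] [AddCommGroup W₂]
  [Module K W₂]

theorem Submodule.finrank_map_add_finrank_inf_ker (f : W →ₗ[K] W₂) (V : Submodule K W)
    [FiniteDimensional K V] :
    finrank K (V.map f) + finrank K ↥(V ⊓ ker f) = finrank K V := by
  rw [← (f.domRestrict V).finrank_range_add_finrank_ker, range_domRestrict, ker_domRestrict,
    ← map_comap_subtype, finrank_map_subtype_eq]

theorem sdist_map_le (f : W →ₗ[K] W₂) (V₁ V₂ : Submodule K W) [FiniteDimensional K V₁]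
    [FiniteDimensional K V₂] :
    sdist (V₁.map f) (V₂.map f) ≤ sdist V₁ V₂ := by
  have h₁ := V₁.finrank_map_add_finrank_inf_ker f
  have h₂ := V₂.finrank_map_add_finrank_inf_ker f
  have h₁₂ := (V₁ ⊓ V₂).finrank_map_add_finrank_inf_ker f
  have hmap : finrank K ↥((V₁ ⊓ V₂).map f) ≤ finrank K ↥(V₁.map f ⊓ V₂.map f) :=
    finrank_mono (map_inf_le f)
  have hker₁ : finrank K ↥(V₁ ⊓ V₂ ⊓ ker f) ≤ finrank K ↥(V₁ ⊓ ker f) :=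
    finrank_mono (inf_le_inf_right _ inf_le_left)
  have hker₂ : finrank K ↥(V₁ ⊓ V₂ ⊓ ker f) ≤ finrank K ↥(V₂ ⊓ ker f) :=
    finrank_mono (inf_le_inf_right _ inf_le_right)
  unfold sdist
  omega

end

theorem sdist_proj_le_general {K : Type*} [Field K]
    {W : Type*} [AddCommGroup W] [Module K W]
    (U' U'' : Submodule K W) (hcompl : IsCompl U' U'')
    (V₁ V₂ : Submodule K W) [FiniteDimensional K V₁] [FiniteDimensional K V₂] :
    sdist (V₁.map (U'.linearProjOfIsCompl U'' hcompl))
          (V₂.map (U'.linearProjOfIsCompl U'' hcompl)) ≤ sdist V₁ V₂ :=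
  sdist_map_le _ V₁ V₂

/-- Projections along a direct-sum decomposition `W = U' ⊕ U''` do not increase the
subspace distance: `D(V₁|_{U'}, V₂|_{U'}) ≤ D(V₁, V₂)`. -/
theorem sdist_proj_le {q : ℕ} {K : Type*} [Field K] [Fintype K] (hq : Fintype.card K = q)
    {W : Type*} [AddCommGroup W] [Module K W]
    (U' U'' : Submodule K W) (hcompl : IsCompl U' U'')
    (V₁ V₂ : Submodule K W) [FiniteDimensional K V₁] [FiniteDimensional K V₂] :
    sdist (V₁.map (U'.linearProjOfIsCompl U'' hcompl))
          (V₂.map (U'.linearProjOfIsCompl U'' hcompl)) ≤ sdist V₁ V₂ :=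
  sdist_proj_le_general U' U'' hcompl V₁ V₂
end

section
/- For all integers 0 ≤ ℓ ≤ n and prime power q ≥ 2, the Gaussian binomial coefficient satisfies 1 < q^{-ℓ(n-ℓ)} · [n choose ℓ]_q < 4, provided 0 < ℓ < n (the lower bound is non-strict equality 1 when ℓ = 0 or ℓ = n). -/
/-!
Writing `n = m + ℓ`, the normalized coefficient `q^{-ℓm} [m+ℓ choose ℓ]_q` is the product over
`1 ≤ j ≤ ℓ` of `(q^m q^j - 1) / (q^m (q^j - 1))`. Each factor exceeds `1` when `m > 0`, and is at most
`(1 - q^{-j})⁻¹`; finally `∏_{j ≤ ℓ} (1 - q^{-j}) > 1/4` for `q ≥ 2`.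
-/

/-- The Gaussian binomial coefficient `[n choose k]_q`, as a rational number. -/
noncomputable def gaussBinom (q n k : ℕ) : ℚ :=
  ∏ i ∈ Finset.range k, ((q : ℚ) ^ (n - i) - 1) / ((q : ℚ) ^ (k - i) - 1)

open Finset

section OrderedField

variable {K : Type*} [Field K] [LinearOrder K] [IsStrictOrderedRing K]

lemma one_lt_div_mul_sub_one {a b : K} (ha : 1 < a) (hb : 1 < b) :
    1 < (a * b - 1) / (a * (b - 1)) := by
  rw [one_lt_div (by nlinarith)]
  linarith

lemma div_mul_sub_one_le {a b : K} (ha : 0 < a) (hb : 1 < b) :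
    (a * b - 1) / (a * (b - 1)) ≤ b / (b - 1) := by
  rw [div_le_div_iff₀ (by nlinarith) (by linarith)]
  nlinarith

/-- Strengthened so that it survives the induction: the step needs the extra `y ^ ℓ / 2`. -/
lemma quarter_add_half_pow_le_prod_one_sub_pow {y : K} (hy₀ : 0 ≤ y) (hy : y ≤ 1 / 2)
    {ℓ : ℕ} (hℓ : 1 ≤ ℓ) :
    1 / 4 + y ^ ℓ / 2 ≤ ∏ j ∈ range ℓ, (1 - y ^ (j + 1)) := by
  induction ℓ, hℓ using Nat.le_induction with
  | base => simp only [prod_range_one]; linarith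
  | succ ℓ hℓ ih =>
    have hyℓ : y ^ (ℓ + 1) ≤ y / 2 :=
      calc y ^ (ℓ + 1) = y ^ ℓ * y := pow_succ y ℓ
        _ ≤ y * y := by gcongr; exact pow_le_of_le_one hy₀ (by linarith) (by omega)
        _ ≤ y / 2 := by nlinarith
    have hfac : 0 ≤ 1 - y ^ (ℓ + 1) := by nlinarith
    have hstep : 1 / 4 + y ^ (ℓ + 1) / 2 ≤ (1 / 4 + y ^ ℓ / 2) * (1 - y ^ (ℓ + 1)) := by
      have hpow : 0 ≤ y ^ ℓ := pow_nonneg hy₀ ℓ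
      rw [pow_succ] at hyℓ ⊢
      nlinarith [mul_le_mul_of_nonneg_left hyℓ hpow]
    rw [prod_range_succ]
    exact hstep.trans (mul_le_mul_of_nonneg_right ih hfac)

lemma prod_pow_succ_div_pow_succ_sub_one_lt_four {x : K} (hx : 2 ≤ x) {ℓ : ℕ} (hℓ : 0 < ℓ) :
    ∏ j ∈ range ℓ, x ^ (j + 1) / (x ^ (j + 1) - 1) < 4 := by
  have hx₀ : 0 < x := by linarith
  have hfactor : ∀ j : ℕ, x ^ (j + 1) / (x ^ (j + 1) - 1) = (1 - x⁻¹ ^ (j + 1))⁻¹ := by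
    intro j
    have : x ^ (j + 1) ≠ 0 := by positivity
    rw [inv_pow, eq_comm, inv_eq_iff_eq_inv, inv_div, sub_div, div_self this, one_div]
  have hquarter : 1 / 4 < ∏ j ∈ range ℓ, (1 - x⁻¹ ^ (j + 1)) := by
    have hbound := quarter_add_half_pow_le_prod_one_sub_pow (inv_nonneg.2 hx₀.le)
      (by rw [inv_le_comm₀ hx₀ (by norm_num)]; linarith) hℓ
    have : 0 < x⁻¹ ^ ℓ / 2 := by positivity
    linarith
  simp_rw [hfactor]
  rw [prod_inv_distrib, inv_lt_comm₀ (by linarith) (by norm_num)]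
  linarith

end OrderedField

lemma gaussBinom_zero (q n : ℕ) : gaussBinom q n 0 = 1 := by
  simp [gaussBinom]

lemma gaussBinom_self {q : ℕ} (hq : 2 ≤ (q : ℚ)) (k : ℕ) : gaussBinom q k k = 1 :=
  prod_eq_one fun i hi => div_self <| by
    have : (1 : ℚ) < (q : ℚ) ^ (k - i) :=
      one_lt_pow₀ (by linarith) (by rw [mem_range] at hi; omega)
    linarith

lemma gaussBinom_add_div_pow (q m ℓ : ℕ) :
    gaussBinom q (m + ℓ) ℓ / (q : ℚ) ^ (ℓ * m) =
      ∏ j ∈ range ℓ, ((q : ℚ) ^ m * q ^ (j + 1) - 1) / ((q : ℚ) ^ m * (q ^ (j + 1) - 1)) := by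
  rw [← prod_range_reflect, mul_comm, pow_mul, ← card_range ℓ, ← prod_const, card_range,
    gaussBinom, ← prod_div_distrib]
  refine prod_congr rfl fun i hi => ?_
  rw [mem_range] at hi
  rw [div_div, mul_comm (((q : ℚ) ^ (ℓ - i) - 1)), ← pow_add,
    show ℓ - 1 - i + 1 = ℓ - i by omega, show m + ℓ - i = m + (ℓ - i) by omega]

theorem gaussBinom_bounds_general (q n ℓ : ℕ)
    (hq : ∃ p k : ℕ, p.Prime ∧ 0 < k ∧ q = p ^ k) :
    ((0 < ℓ → ℓ < n →
        1 < gaussBinom q n ℓ / (q : ℚ) ^ (ℓ * (n - ℓ)) ∧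
        gaussBinom q n ℓ / (q : ℚ) ^ (ℓ * (n - ℓ)) < 4)) ∧
    ((ℓ = 0 ∨ ℓ = n) → gaussBinom q n ℓ / (q : ℚ) ^ (ℓ * (n - ℓ)) = 1) := by
  have hq2 : (2 : ℚ) ≤ q := by
    obtain ⟨p, k, hp, hk, rfl⟩ := hq
    exact_mod_cast Nat.one_lt_pow hk.ne' hp.one_lt
  refine ⟨fun hℓ hℓn => ?_, ?_⟩
  · obtain ⟨m, hm, rfl⟩ : ∃ m, 0 < m ∧ n = m + ℓ := ⟨n - ℓ, by omega, by omega⟩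
    rw [Nat.add_sub_cancel, gaussBinom_add_div_pow]
    have hqm : 1 < (q : ℚ) ^ m := one_lt_pow₀ (by linarith) hm.ne'
    have hqj (j : ℕ) : 1 < (q : ℚ) ^ (j + 1) := one_lt_pow₀ (by linarith) j.succ_ne_zero
    constructor
    · calc (1 : ℚ) = ∏ _j ∈ range ℓ, 1 := prod_const_one.symm
        _ < _ := prod_lt_prod_of_nonempty (fun _ _ => one_pos)
            (fun j _ => one_lt_div_mul_sub_one hqm (hqj j)) (nonempty_range_iff.2 hℓ.ne')
    · calc _ ≤ ∏ j ∈ range ℓ, (q : ℚ) ^ (j + 1) / ((q : ℚ) ^ (j + 1) - 1) :=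
            prod_le_prod (fun j _ => (one_pos.trans (one_lt_div_mul_sub_one hqm (hqj j))).le)
              (fun j _ => div_mul_sub_one_le (by linarith) (hqj j))
        _ < 4 := prod_pow_succ_div_pow_succ_sub_one_lt_four hq2 hℓ
  · rintro (rfl | rfl)
    · simp [gaussBinom_zero]
    · simp [gaussBinom_self hq2]

/-- For a prime power `q` and `0 ≤ ℓ ≤ n`, the normalized Gaussian binomial
`q^{-ℓ(n-ℓ)}·[n choose ℓ]_q` lies strictly between `1` and `4` when `0 < ℓ < n`,
and equals `1` when `ℓ = 0` or `ℓ = n`. -/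
theorem gaussBinom_bounds (q n ℓ : ℕ)
    (hq : ∃ p k : ℕ, p.Prime ∧ 0 < k ∧ q = p ^ k) (hℓn : ℓ ≤ n) :
    ((0 < ℓ → ℓ < n →
        1 < gaussBinom q n ℓ / (q : ℚ) ^ (ℓ * (n - ℓ)) ∧
        gaussBinom q n ℓ / (q : ℚ) ^ (ℓ * (n - ℓ)) < 4)) ∧
    ((ℓ = 0 ∨ ℓ = n) → gaussBinom q n ℓ / (q : ℚ) ^ (ℓ * (n - ℓ)) = 1) :=
  gaussBinom_bounds_general q n ℓ hq
end

section
/- For 0 ≤ i ≤ ℓ ≤ n, and a fixed ℓ-dimensional subspace V of F_q^n, the number of ℓ-dimensional subspaces U with dim(U ∩ V) = ℓ - i equals q^{i²} · [ℓ choose i]_q · [(n-ℓ) choose i]_q; hence the number of ℓ-dimensional subspaces at subspace distance at most T (T even) from V equals Σ_{i=0}^{T/2} q^{i²} [ℓ choose i]_q [(n-ℓ) choose i]_q. -/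
open Finset Module Submodule LinearMap

section counting
variable {α β : Type*}

lemma aux_card_fiber_sum [Finite α] (f : α → ℕ) (m : ℕ) (h : ∀ a, f a < m) :
    Nat.card α = ∑ i ∈ Finset.range m, Nat.card {a : α // f a = i} := by
  classical
  cases nonempty_fintype α
  rw [Nat.card_eq_fintype_card, ← Finset.card_univ,
    Finset.card_eq_sum_card_fiberwise (f := f) (t := Finset.range m)
      (fun x _ => Finset.mem_range.2 (h x))]
  refine Finset.sum_congr rfl fun i _ => ?_
  rw [Nat.card_eq_fintype_card, Fintype.card_subtype]

lemma aux_card_mul [Finite α] [Finite β] (f : α → β) (c : ℕ)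
    (h : ∀ b, Nat.card {a : α // f a = b} = c) : Nat.card α = Nat.card β * c := by
  classical
  cases nonempty_fintype α
  cases nonempty_fintype β
  calc Nat.card α = Nat.card (Σ b : β, {a : α // f a = b}) :=
        (Nat.card_congr (Equiv.sigmaFiberEquiv f)).symm
    _ = ∑ b : β, Nat.card {a : α // f a = b} := by
        rw [Nat.card_eq_fintype_card, Fintype.card_sigma]
        exact Finset.sum_congr rfl fun b _ => Nat.card_eq_fintype_card.symm
    _ = Nat.card β * c := by
        simp only [h, Finset.sum_const, Finset.card_univ, smul_eq_mul,
          Nat.card_eq_fintype_card, mul_comm]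

end counting

section li
set_option linter.unusedSectionVars false
variable {K M : Type*} [Field K] [Fintype K] [AddCommGroup M] [Module K M] [Finite M]

lemma aux_card_li (k : ℕ) :
    Nat.card {s : Fin k → M // LinearIndependent K s} =
      ∏ j ∈ Finset.range k,
        (Fintype.card K ^ Module.finrank K M - Fintype.card K ^ j) := by
  rcases le_or_gt k (Module.finrank K M) with hk | hk
  · rw [card_linearIndependent hk,
      Fin.prod_univ_eq_prod_range (fun j => Fintype.card K ^ Module.finrank K M - Fintype.card K ^ j) k]
  · have he : IsEmpty {s : Fin k → M // LinearIndependent K s} := by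
      constructor
      rintro ⟨s, hs⟩
      have := hs.fintype_card_le_finrank
      simp only [Fintype.card_fin] at this
      omega
    rw [Nat.card_of_isEmpty]
    symm
    apply Finset.prod_eq_zero (Finset.mem_range.2 hk)
    exact Nat.sub_self _

lemma aux_card_fiber_linear {N : Type*} [AddCommGroup N] [Module K N]
    (f : M →ₗ[K] N) {y : N} (hy : y ∈ LinearMap.range f) :
    Nat.card {x : M // f x = y} = Nat.card (LinearMap.ker f) := by
  obtain ⟨x0, hx0⟩ := hy
  refine Nat.card_congr ⟨fun x => ⟨x.1 - x0, ?_⟩, fun z => ⟨z.1 + x0, ?_⟩, ?_, ?_⟩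
  · simp [LinearMap.mem_ker, map_sub, x.2, hx0]
  · simp [map_add, (LinearMap.mem_ker).1 z.2, hx0]
  · intro x; ext; simp
  · intro z; ext; simp

lemma aux_card_li_comp {N : Type*} [AddCommGroup N] [Module K N] [Finite N]
    (f : M →ₗ[K] N) (k : ℕ) :
    Nat.card {u : Fin k → M // LinearIndependent K (f ∘ u)} =
      Nat.card (LinearMap.ker f) ^ k *
        ∏ j ∈ Finset.range k,
          (Fintype.card K ^ Module.finrank K (LinearMap.range f) - Fintype.card K ^ j) := by
  classical
  set B := {v : Fin k → LinearMap.range f // LinearIndependent K v}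
  have hcoe : ∀ (v : Fin k → LinearMap.range f),
      ((LinearMap.range f).subtype ∘ v) = fun j => ((v j : N)) := fun v => rfl
  set g : {u : Fin k → M // LinearIndependent K (f ∘ u)} → B := fun u =>
    ⟨fun j => ⟨f (u.1 j), LinearMap.mem_range_self f _⟩, by
      rw [← LinearMap.linearIndependent_iff ((LinearMap.range f).subtype)
        (Submodule.ker_subtype _)]
      exact u.2⟩ with hg
  have hfib : ∀ v : B, Nat.card {a // g a = v} = Nat.card (LinearMap.ker f) ^ k := by
    intro v
    have e1 : {a // g a = v} ≃ {u : Fin k → M // ∀ j, f (u j) = (v.1 j : N)} := by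
      refine ⟨fun a => ⟨a.1.1, fun j => ?_⟩, fun u => ⟨⟨u.1, ?_⟩, ?_⟩, fun a => ?_, fun u => ?_⟩
      · have := congrArg (fun z => (z.1 j : N)) a.2
        simpa [hg] using this
      · have : f ∘ u.1 = (LinearMap.range f).subtype ∘ v.1 := by
          funext j; exact u.2 j
        rw [this, LinearMap.linearIndependent_iff ((LinearMap.range f).subtype)
          (Submodule.ker_subtype _)]
        exact v.2
      · apply Subtype.ext
        funext j
        exact Subtype.ext (u.2 j)
      · apply Subtype.ext; rfl
      · apply Subtype.ext; rfl
    have e2 : {u : Fin k → M // ∀ j, f (u j) = (v.1 j : N)} ≃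
        ∀ j : Fin k, {x : M // f x = (v.1 j : N)} :=
      ⟨fun u j => ⟨u.1 j, u.2 j⟩, fun p => ⟨fun j => (p j).1, fun j => (p j).2⟩,
        fun u => Subtype.ext rfl, fun p => rfl⟩
    rw [Nat.card_congr (e1.trans e2), Nat.card_pi]
    rw [Finset.prod_congr rfl fun j _ => aux_card_fiber_linear f (v.1 j).2]
    simp [Finset.prod_const]
  rw [aux_card_mul g (Nat.card (LinearMap.ker f) ^ k) hfib, aux_card_li, mul_comm]

end li

section geom
set_option linter.unusedSectionVars false
variable {K M : Type*} [Field K] [Fintype K] [AddCommGroup M] [Module K M] [Finite M]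
  (V : Submodule K M) {s k : ℕ} (w : Fin s → V) (u : Fin k → M)

lemma aux_disjoint (hu : LinearIndependent K (V.mkQ ∘ u)) :
    Disjoint V (Submodule.span K (Set.range u)) := by
  rw [Submodule.disjoint_def]
  intro x hxV hxu
  obtain ⟨c, hc⟩ := (mem_span_range_iff_exists_fun K).1 hxu
  have h0 : ∑ j, c j • (V.mkQ (u j)) = 0 := by
    have hx0 : V.mkQ x = 0 := by
      rwa [Submodule.mkQ_apply, Submodule.Quotient.mk_eq_zero]
    calc ∑ j, c j • V.mkQ (u j) = V.mkQ (∑ j, c j • u j) := by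
          rw [map_sum]; simp [map_smul]
      _ = 0 := by rw [hc, hx0]
  have hz := Fintype.linearIndependent_iff.1 hu c h0
  rw [← hc]
  simp [hz]

lemma aux_ind (hw : LinearIndependent K w) (hu : LinearIndependent K (V.mkQ ∘ u)) :
    LinearIndependent K (Sum.elim (fun j => ((w j : M))) u) := by
  apply LinearIndependent.sum_type
  · exact hw.map' V.subtype (Submodule.ker_subtype V)
  · exact hu.of_comp V.mkQ
  · refine Disjoint.mono_left ?_ (aux_disjoint V u hu)
    rw [Submodule.span_le]
    rintro x ⟨j, rfl⟩
    exact (w j).2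

lemma aux_rank_span (hw : LinearIndependent K w) (hu : LinearIndependent K (V.mkQ ∘ u)) :
    Module.finrank K (Submodule.span K
      (Set.range (Sum.elim (fun j => ((w j : M))) u))) = s + k := by
  rw [finrank_span_eq_card (aux_ind V w u hw hu)]
  simp

lemma aux_inf (hw : LinearIndependent K w) (hu : LinearIndependent K (V.mkQ ∘ u)) :
    Submodule.span K (Set.range (Sum.elim (fun j => ((w j : M))) u)) ⊓ V
      = Submodule.span K (Set.range (fun j => ((w j : M)))) := by
  apply le_antisymm
  · intro x hx
    obtain ⟨hxU, hxV⟩ := Submodule.mem_inf.1 hx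
    obtain ⟨c, hc⟩ := (mem_span_range_iff_exists_fun K).1 hxU
    rw [Fintype.sum_sum_type] at hc
    simp only [Sum.elim_inl, Sum.elim_inr] at hc
    have h0 : ∑ j, c (Sum.inr j) • (V.mkQ (u j)) = 0 := by
      have hx0 : V.mkQ x = 0 := by
        rwa [Submodule.mkQ_apply, Submodule.Quotient.mk_eq_zero]
      have h1 : V.mkQ (∑ j, c (Sum.inl j) • ((w j : M))) = 0 := by
        rw [Submodule.mkQ_apply, Submodule.Quotient.mk_eq_zero]
        exact Submodule.sum_mem _ fun j _ => Submodule.smul_mem _ _ (w j).2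
      calc ∑ j, c (Sum.inr j) • V.mkQ (u j)
          = V.mkQ (∑ j, c (Sum.inl j) • ((w j : M))) +
            V.mkQ (∑ j, c (Sum.inr j) • u j) := by
            rw [h1, zero_add, map_sum]; simp [map_smul]
        _ = V.mkQ x := by rw [← map_add, hc]
        _ = 0 := hx0
    have hz := Fintype.linearIndependent_iff.1 hu _ h0
    have hx' : x = ∑ j, c (Sum.inl j) • ((w j : M)) := by
      rw [← hc]; simp [hz]
    rw [hx']
    exact (mem_span_range_iff_exists_fun K).2 ⟨fun j => c (Sum.inl j), rfl⟩
  · apply le_inf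
    · apply Submodule.span_mono
      rintro x ⟨j, rfl⟩
      exact ⟨Sum.inl j, rfl⟩
    · rw [Submodule.span_le]
      rintro x ⟨j, rfl⟩
      exact (w j).2

lemma aux_rank_inf (hw : LinearIndependent K w) (hu : LinearIndependent K (V.mkQ ∘ u)) :
    Module.finrank K
      ↥((Submodule.span K (Set.range (Sum.elim (fun j => ((w j : M))) u))) ⊓ V) = s := by
  rw [aux_inf V w u hw hu]
  have hws : LinearIndependent K (fun j => ((w j : M))) :=
    hw.map' V.subtype (Submodule.ker_subtype V)
  rw [finrank_span_eq_card hws]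
  simp

end geom

section core
variable {K M : Type*} [Field K] [Fintype K] [AddCommGroup M] [Module K M] [Finite M]

set_option maxHeartbeats 1000000 in
lemma aux_sphere_nat {ℓ i : ℕ} (hi : i ≤ ℓ)
    (V : Submodule K M) (hV : Module.finrank K V = ℓ) :
    Nat.card {U : Submodule K M //
        Module.finrank K U = ℓ ∧ Module.finrank K ↥(U ⊓ V) = ℓ - i} *
      ((∏ j ∈ Finset.range (ℓ - i), (Fintype.card K ^ (ℓ - i) - Fintype.card K ^ j)) *
        ((Fintype.card K ^ (ℓ - i)) ^ i *
          ∏ j ∈ Finset.range i, (Fintype.card K ^ i - Fintype.card K ^ j)))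
    = (∏ j ∈ Finset.range (ℓ - i), (Fintype.card K ^ ℓ - Fintype.card K ^ j)) *
        ((Fintype.card K ^ ℓ) ^ i *
          ∏ j ∈ Finset.range i,
            (Fintype.card K ^ (Module.finrank K M - ℓ) - Fintype.card K ^ j)) := by
  classical
  haveI : Finite (Submodule K M) :=
    Finite.of_injective (fun U => (U : Set M)) SetLike.coe_injective
  haveI : Finite (M ⧸ V) := Finite.of_surjective _ (Submodule.mkQ_surjective V)
  set q := Fintype.card K with hq
  set s := ℓ - i with hs
  have hsk : s + i = ℓ := Nat.sub_add_cancel hi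
  set Sph := {U : Submodule K M //
      Module.finrank K U = ℓ ∧ Module.finrank K ↥(U ⊓ V) = ℓ - i} with hSph
  set A := {p : (Fin s → V) × (Fin i → M) //
      LinearIndependent K p.1 ∧ LinearIndependent K (V.mkQ ∘ p.2)} with hA
  set Φ : A → Sph := fun p =>
    ⟨Submodule.span K (Set.range (Sum.elim (fun j => ((p.1.1 j : M))) p.1.2)),
      by rw [aux_rank_span V p.1.1 p.1.2 p.2.1 p.2.2]; exact hsk,
      by rw [aux_rank_inf V p.1.1 p.1.2 p.2.1 p.2.2]⟩ with hΦ
  have hAcard : Nat.card A = (∏ j ∈ Finset.range s, (q ^ ℓ - q ^ j)) *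
      ((q ^ ℓ) ^ i * ∏ j ∈ Finset.range i,
        (q ^ (Module.finrank K M - ℓ) - q ^ j)) := by
    have e : A ≃ ({w : Fin s → V // LinearIndependent K w} ×
        {u : Fin i → M // LinearIndependent K (V.mkQ ∘ u)}) :=
      Equiv.subtypeProdEquivProd (p := fun w : Fin s → V => LinearIndependent K w)
        (q := fun u : Fin i → M => LinearIndependent K (V.mkQ ∘ u))
    rw [Nat.card_congr e, Nat.card_prod, aux_card_li, aux_card_li_comp]
    have hcard : Nat.card (LinearMap.ker V.mkQ) = q ^ ℓ := by
      haveI := Fintype.ofFinite V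
      rw [Submodule.ker_mkQ, Nat.card_eq_fintype_card, card_eq_pow_finrank (K := K), hV]
    have hrange : Module.finrank K (LinearMap.range V.mkQ) =
        Module.finrank K M - ℓ := by
      rw [Submodule.range_mkQ, finrank_top]
      have := Submodule.finrank_quotient_add_finrank V
      omega
    rw [hV, hcard, hrange]
  have hfib : ∀ b : Sph, Nat.card {a : A // Φ a = b} =
      (∏ j ∈ Finset.range s, (q ^ s - q ^ j)) *
        ((q ^ s) ^ i * ∏ j ∈ Finset.range i, (q ^ i - q ^ j)) := by
    rintro ⟨U, hU1, hU2⟩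
    set ρ : ↥U →ₗ[K] M ⧸ V := V.mkQ ∘ₗ U.subtype with hρ
    have e : {a : A // Φ a = ⟨U, hU1, hU2⟩} ≃
        ({w : Fin s → ↥(U ⊓ V) // LinearIndependent K w} ×
         {u : Fin i → ↥U // LinearIndependent K (ρ ∘ u)}) := by
      have key : ∀ a : {a : A // Φ a = ⟨U, hU1, hU2⟩},
          Submodule.span K (Set.range
            (Sum.elim (fun j => ((a.1.1.1 j : M))) a.1.1.2)) = U :=
        fun a => congrArg Subtype.val a.2
      refine ⟨fun a => ⟨⟨fun j => ⟨(a.1.1.1 j : M),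
            (le_of_eq (key a)) (Submodule.subset_span ⟨Sum.inl j, rfl⟩),
            (a.1.1.1 j).2⟩, ?_⟩,
          ⟨fun j => ⟨a.1.1.2 j,
            (le_of_eq (key a)) (Submodule.subset_span ⟨Sum.inr j, rfl⟩)⟩, ?_⟩⟩,
        fun p => ⟨⟨⟨fun j => ⟨(p.1.1 j : M), (p.1.1 j).2.2⟩,
          fun j => (p.2.1 j : M)⟩, ?_, ?_⟩, ?_⟩, fun a => ?_, fun p => ?_⟩
      · exact LinearIndependent.of_comp ((U ⊓ V).subtype)
          (a.1.2.1.map' V.subtype (Submodule.ker_subtype V))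
      · exact a.1.2.2
      · exact LinearIndependent.of_comp V.subtype
          (p.1.2.map' (U ⊓ V).subtype (Submodule.ker_subtype _))
      · exact p.2.2
      · rw [Subtype.ext_iff]
        simp only [hΦ]
        have hle : Submodule.span K (Set.range (Sum.elim
            (fun j => ((p.1.1 j : M))) (fun j => ((p.2.1 j : M))))) ≤ U := by
          rw [Submodule.span_le]
          rintro x ⟨j | j, rfl⟩
          · exact (p.1.1 j).2.1
          · exact (p.2.1 j).2
        refine Submodule.eq_of_le_of_finrank_le hle ?_
        have hw2i : LinearIndependent K
            (fun j => (⟨(p.1.1 j : M), (p.1.1 j).2.2⟩ : V)) :=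
          LinearIndependent.of_comp V.subtype
            (p.1.2.map' (U ⊓ V).subtype (Submodule.ker_subtype _))
        have hr : Module.finrank K ↥(Submodule.span K (Set.range (Sum.elim
            (fun j => ((p.1.1 j : M))) (fun j => ((p.2.1 j : M)))))) = s + i :=
          aux_rank_span V (fun j => ⟨(p.1.1 j : M), (p.1.1 j).2.2⟩)
            (fun j => (p.2.1 j : M)) hw2i p.2.2
        rw [hU1, hr, hsk]
      · exact Subtype.ext (Subtype.ext rfl)
      · exact Prod.ext (Subtype.ext rfl) (Subtype.ext rfl)
    rw [Nat.card_congr e, Nat.card_prod, aux_card_li, aux_card_li_comp]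
    have hker : LinearMap.ker ρ = Submodule.comap U.subtype V := by
      rw [hρ, LinearMap.ker_comp, Submodule.ker_mkQ]
    have hcomap : Submodule.comap U.subtype V = Submodule.comap U.subtype (U ⊓ V) := by
      ext x
      simp [Submodule.mem_comap, x.2]
    have hkrank : Module.finrank K (LinearMap.ker ρ) = s := by
      rw [hker, hcomap,
        (Submodule.comapSubtypeEquivOfLe (inf_le_left : U ⊓ V ≤ U)).finrank_eq, hU2]
    have hkcard : Nat.card (LinearMap.ker ρ) = q ^ s := by
      haveI := Fintype.ofFinite (LinearMap.ker ρ)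
      rw [Nat.card_eq_fintype_card, card_eq_pow_finrank (K := K), hkrank]
    have hrrank : Module.finrank K (LinearMap.range ρ) = i := by
      have h2 := LinearMap.finrank_range_add_finrank_ker ρ
      rw [hkrank, hU1] at h2
      omega
    rw [hU2, hkcard, hrrank]
  rw [(aux_card_mul Φ _ hfib).symm.trans hAcard]

end core

section gauss

noncomputable def gaussF (q m : ℕ) : ℚ := ∏ j ∈ Finset.range m, ((q:ℚ)^(j+1) - 1)

lemma gaussF_pos {q : ℕ} (hq : 2 ≤ q) (m : ℕ) : 0 < gaussF q m := by
  apply Finset.prod_pos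
  intro j _
  have h1 : (1:ℚ) < (q:ℚ) := by exact_mod_cast hq
  have := one_lt_pow₀ h1 (by omega : j + 1 ≠ 0)
  linarith

lemma gaussP {q : ℕ} (hq : 2 ≤ q) {m k : ℕ} (hk : k ≤ m) :
    (∏ j ∈ Finset.range k, ((q:ℚ)^m - (q:ℚ)^j)) * gaussF q (m - k) =
      (q:ℚ)^(∑ j ∈ Finset.range k, j) * gaussF q m := by
  induction k with
  | zero => simp [gaussF]
  | succ k ih =>
    have hk' : k ≤ m := Nat.le_of_succ_le hk
    have hmk : m - k = (m - (k+1)) + 1 := by omega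
    have hsplit : gaussF q (m - k) = gaussF q (m - (k+1)) * ((q:ℚ)^(m - k) - 1) := by
      rw [hmk, gaussF, Finset.prod_range_succ, ← gaussF, ← hmk]
    have hfac : (q:ℚ)^m - (q:ℚ)^k = (q:ℚ)^k * ((q:ℚ)^(m - k) - 1) := by
      rw [mul_sub, mul_one, ← pow_add]
      congr 2
      omega
    rw [Finset.prod_range_succ, Finset.sum_range_succ, hfac, pow_add]
    calc (∏ j ∈ Finset.range k, ((q:ℚ)^m - (q:ℚ)^j)) *
          ((q:ℚ)^k * ((q:ℚ)^(m-k) - 1)) * gaussF q (m - (k+1))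
        = (q:ℚ)^k * ((∏ j ∈ Finset.range k, ((q:ℚ)^m - (q:ℚ)^j)) *
            gaussF q (m - k)) := by rw [hsplit]; ring
      _ = (q:ℚ)^k * ((q:ℚ)^(∑ j ∈ Finset.range k, j) * gaussF q m) := by rw [ih hk']
      _ = (q:ℚ)^(∑ j ∈ Finset.range k, j) * (q:ℚ)^k * gaussF q m := by ring

lemma gauss_eq {q : ℕ} (hq : 2 ≤ q) {m k : ℕ} (hk : k ≤ m) :
    gaussBinom q m k = gaussF q m / (gaussF q k * gaussF q (m - k)) := by
  rw [gaussBinom, Finset.prod_div_distrib]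
  have h1 : ∏ j ∈ Finset.range k, ((q:ℚ)^(m - j) - 1) = gaussF q m / gaussF q (m-k) := by
    rw [eq_div_iff (gaussF_pos hq _).ne']
    have hrefl : ∏ j ∈ Finset.range k, ((q:ℚ)^(m - j) - 1)
        = ∏ j ∈ Finset.range k, ((q:ℚ)^((m-k) + j + 1) - 1) := by
      rw [← Finset.prod_range_reflect]
      apply Finset.prod_congr rfl
      intro j hj
      rw [Finset.mem_range] at hj
      have he : m - (k - 1 - j) = (m - k) + j + 1 := by omega
      rw [he]
    rw [hrefl]
    have hFm : gaussF q m = gaussF q ((m-k) + k) := by rw [Nat.sub_add_cancel hk]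
    have hFadd : gaussF q ((m-k) + k) = gaussF q (m-k) *
        ∏ j ∈ Finset.range k, ((q:ℚ)^((m-k) + j + 1) - 1) := by
      rw [gaussF, gaussF, Finset.prod_range_add]
    rw [hFm, hFadd]
    ring
  have h2 : ∏ j ∈ Finset.range k, ((q:ℚ)^(k - j) - 1) = gaussF q k := by
    rw [gaussF, ← Finset.prod_range_reflect]
    apply Finset.prod_congr rfl
    intro j hj
    rw [Finset.mem_range] at hj
    have he : k - (k - 1 - j) = j + 1 := by omega
    rw [he]
  rw [h1, h2, div_div, mul_comm]

lemma gauss_mul_direct {q : ℕ} (hq : 2 ≤ q) {m k : ℕ} (hk : k ≤ m) :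
    gaussBinom q m k * (∏ j ∈ Finset.range k, ((q:ℚ)^k - (q:ℚ)^j))
      = ∏ j ∈ Finset.range k, ((q:ℚ)^m - (q:ℚ)^j) := by
  have h1 := gaussP hq hk
  have h2 := gaussP hq (le_refl k)
  rw [Nat.sub_self] at h2
  have hF0 : gaussF q 0 = 1 := by simp [gaussF]
  rw [hF0, mul_one] at h2
  have hFk := (gaussF_pos hq k).ne'
  have hFmk := (gaussF_pos hq (m-k)).ne'
  have h3 : gaussBinom q m k * (gaussF q k * gaussF q (m-k)) = gaussF q m := by
    rw [gauss_eq hq hk]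
    exact div_mul_cancel₀ _ (mul_ne_zero hFk hFmk)
  apply mul_right_cancel₀ hFmk
  rw [h2]
  linear_combination (q:ℚ)^(∑ j ∈ Finset.range k, j) * h3 - h1

lemma gauss_mul_compl {q : ℕ} (hq : 2 ≤ q) {m k : ℕ} (hk : k ≤ m) :
    gaussBinom q m k * (∏ j ∈ Finset.range (m-k), ((q:ℚ)^(m-k) - (q:ℚ)^j))
      = ∏ j ∈ Finset.range (m-k), ((q:ℚ)^m - (q:ℚ)^j) := by
  have h1 := gaussP hq (Nat.sub_le m k)
  rw [(by omega : m - (m - k) = k)] at h1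
  have h2 := gaussP hq (le_refl (m-k))
  rw [Nat.sub_self] at h2
  have hF0 : gaussF q 0 = 1 := by simp [gaussF]
  rw [hF0, mul_one] at h2
  have hFk := (gaussF_pos hq k).ne'
  have hFmk := (gaussF_pos hq (m-k)).ne'
  have h3 : gaussBinom q m k * (gaussF q k * gaussF q (m-k)) = gaussF q m := by
    rw [gauss_eq hq hk]
    exact div_mul_cancel₀ _ (mul_ne_zero hFk hFmk)
  apply mul_right_cancel₀ hFk
  rw [h2]
  linear_combination (q:ℚ)^(∑ j ∈ Finset.range (m-k), j) * h3 - h1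

lemma cast_prod_pow {q a c : ℕ} (hq : 1 ≤ q) (h : c ≤ a) :
    ((∏ j ∈ Finset.range c, (q^a - q^j) : ℕ) : ℚ) =
      ∏ j ∈ Finset.range c, ((q:ℚ)^a - (q:ℚ)^j) := by
  rw [Nat.cast_prod]
  apply Finset.prod_congr rfl
  intro j hj
  rw [Finset.mem_range] at hj
  have hle : q^j ≤ q^a := Nat.pow_le_pow_right hq (by omega)
  push_cast [Nat.cast_sub hle]
  ring

lemma prod_pow_sub_pos {q a : ℕ} (hq : 2 ≤ q) :
    0 < ∏ j ∈ Finset.range a, ((q:ℚ)^a - (q:ℚ)^j) := by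
  apply Finset.prod_pos
  intro j hj
  rw [Finset.mem_range] at hj
  have h2 : (1:ℚ) < (q:ℚ) := by exact_mod_cast hq
  have := pow_lt_pow_right₀ h2 hj
  linarith

lemma nat_prod_pos {q a : ℕ} (hq : 2 ≤ q) :
    0 < ∏ j ∈ Finset.range a, (q^a - q^j) := by
  apply Finset.prod_pos
  intro j hj
  rw [Finset.mem_range] at hj
  have := Nat.pow_lt_pow_right (by omega : 1 < q) hj
  omega

end gauss

section sphereq

lemma cast_prod_pow' {q a c : ℕ} (hq : 1 ≤ q) (h : c ≤ a) :
    (∏ j ∈ Finset.range c, ((q^a - q^j : ℕ) : ℚ)) =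
      ∏ j ∈ Finset.range c, ((q:ℚ)^a - (q:ℚ)^j) := by
  apply Finset.prod_congr rfl
  intro j hj
  rw [Finset.mem_range] at hj
  have hle : q^j ≤ q^a := Nat.pow_le_pow_right hq (by omega)
  push_cast [Nat.cast_sub hle]
  ring

lemma aux_sphere_q {q n ℓ i : ℕ} {K : Type} [Field K] [Fintype K]
    (hq : Fintype.card K = q) (hℓn : ℓ ≤ n) (hi : i ≤ ℓ)
    (V : Submodule K (Fin n → K)) (hV : Module.finrank K ↥V = ℓ) :
    (Nat.card {U : Submodule K (Fin n → K) //
        Module.finrank K ↥U = ℓ ∧ Module.finrank K ↥(U ⊓ V) = ℓ - i} : ℚ) =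
      (q : ℚ) ^ (i ^ 2) * gaussBinom q ℓ i * gaussBinom q (n - ℓ) i := by
  subst hq
  set q := Fintype.card K with hq
  have h2q : 2 ≤ q := Fintype.one_lt_card
  have hnat := aux_sphere_nat hi V hV
  rw [Module.finrank_fin_fun] at hnat
  rw [← hq] at hnat
  set N := Nat.card {U : Submodule K (Fin n → K) //
      Module.finrank K ↥U = ℓ ∧ Module.finrank K ↥(U ⊓ V) = ℓ - i} with hN
  rcases le_or_gt i (n - ℓ) with hin | hin
  · have hcast : (N : ℚ) *
        ((∏ j ∈ Finset.range (ℓ-i), ((q:ℚ)^(ℓ-i) - (q:ℚ)^j)) *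
          (((q:ℚ)^(ℓ-i))^i * ∏ j ∈ Finset.range i, ((q:ℚ)^i - (q:ℚ)^j)))
      = (∏ j ∈ Finset.range (ℓ-i), ((q:ℚ)^ℓ - (q:ℚ)^j)) *
          (((q:ℚ)^ℓ)^i * ∏ j ∈ Finset.range i, ((q:ℚ)^(n-ℓ) - (q:ℚ)^j)) := by
      have hc := congrArg (Nat.cast : ℕ → ℚ) hnat
      push_cast at hc
      rw [cast_prod_pow' (by omega) (Nat.sub_le ℓ i),
        cast_prod_pow' (by omega) (le_refl (ℓ - i)),
        cast_prod_pow' (by omega) (le_refl i),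
        cast_prod_pow' (by omega) hin] at hc
      exact hc
    have hD : (∏ j ∈ Finset.range (ℓ-i), ((q:ℚ)^(ℓ-i) - (q:ℚ)^j)) *
        (((q:ℚ)^(ℓ-i))^i * ∏ j ∈ Finset.range i, ((q:ℚ)^i - (q:ℚ)^j)) ≠ 0 := by
      have hq0 : (0:ℚ) < (q:ℚ) := by exact_mod_cast (by omega : 0 < q)
      exact mul_ne_zero (prod_pow_sub_pos h2q).ne'
        (mul_ne_zero (pow_ne_zero _ (pow_ne_zero _ hq0.ne')) (prod_pow_sub_pos h2q).ne')
    have e1 := gauss_mul_compl h2q hi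
    have e2 := gauss_mul_direct h2q hin
    have hpow : ((q:ℚ))^(i^2) * ((q:ℚ)^(ℓ-i))^i = ((q:ℚ)^ℓ)^i := by
      rw [← pow_mul, ← pow_mul, ← pow_add]
      congr 1
      obtain ⟨d, rfl⟩ := Nat.exists_eq_add_of_le hi
      simp [pow_two]
      ring
    apply mul_right_cancel₀ hD
    rw [hcast, ← e1, ← e2, ← hpow]
    ring
  · have hz : ∏ j ∈ Finset.range i, (q^(n-ℓ) - q^j) = 0 :=
      Finset.prod_eq_zero (Finset.mem_range.2 hin) (Nat.sub_self _)
    rw [hz, mul_zero, mul_zero] at hnat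
    have hfibpos : 0 < (∏ j ∈ Finset.range (ℓ - i), (q ^ (ℓ - i) - q ^ j)) *
        ((q ^ (ℓ - i)) ^ i * ∏ j ∈ Finset.range i, (q ^ i - q ^ j)) := by
      have hq0 : 0 < q := by omega
      exact mul_pos (nat_prod_pos h2q) (mul_pos (by positivity) (nat_prod_pos h2q))
    have hN0 : N = 0 := by
      rcases Nat.mul_eq_zero.1 hnat with h | h
      · exact h
      · omega
    have hg0 : gaussBinom q (n-ℓ) i = 0 := by
      apply Finset.prod_eq_zero (Finset.mem_range.2 hin)
      rw [Nat.sub_self, pow_zero, sub_self, zero_div]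
    rw [hN0, hg0, mul_zero]
    simp

end sphereq


/-- For a fixed `ℓ`-dimensional subspace `V` of `F_q^n`, the number of `ℓ`-dimensional
subspaces `U` with `dim(U ∩ V) = ℓ - i` is `q^{i²}·[ℓ choose i]_q·[n-ℓ choose i]_q`,
and hence the ball of subspace-distance radius `T` (with `T` even) around `V` has size
`Σ_{i=0}^{T/2} q^{i²}·[ℓ choose i]_q·[n-ℓ choose i]_q`. -/
theorem subspace_sphere_count {q n ℓ T : ℕ} {K : Type} [Field K] [Fintype K]
    (hq : Fintype.card K = q) (hℓn : ℓ ≤ n) (hT : Even T)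
    (V : Submodule K (Fin n → K)) (hV : Module.finrank K ↥V = ℓ) :
    (∀ i : ℕ, i ≤ ℓ →
      (Nat.card {U : Submodule K (Fin n → K) //
          Module.finrank K ↥U = ℓ ∧ Module.finrank K ↥(U ⊓ V) = ℓ - i} : ℚ) =
        (q : ℚ) ^ (i ^ 2) * gaussBinom q ℓ i * gaussBinom q (n - ℓ) i) ∧
    (Nat.card {U : Submodule K (Fin n → K) //
        Module.finrank K ↥U = ℓ ∧ sdist U V ≤ (T : ℤ)} : ℚ) =
      ∑ i ∈ Finset.range (T / 2 + 1),
        (q : ℚ) ^ (i ^ 2) * gaussBinom q ℓ i * gaussBinom q (n - ℓ) i := by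
  classical
  constructor
  · intro i hi
    exact aux_sphere_q hq hℓn hi V hV
  · haveI : Finite (Submodule K (Fin n → K)) :=
      Finite.of_injective (fun U => (U : Set (Fin n → K))) SetLike.coe_injective
    obtain ⟨t, rfl⟩ := hT
    have hdiv : (t + t) / 2 = t := by omega
    rw [hdiv]
    set B := {U : Submodule K (Fin n → K) //
        Module.finrank K ↥U = ℓ ∧ sdist U V ≤ ((t + t : ℕ) : ℤ)} with hB
    have hd : ∀ b : B, Module.finrank K ↥(b.1 ⊓ V) ≤ ℓ := fun b => by
      exact le_trans (Submodule.finrank_mono inf_le_left) (le_of_eq b.2.1)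
    set f : B → ℕ := fun b => ℓ - Module.finrank K ↥(b.1 ⊓ V) with hf
    have hflt : ∀ b : B, f b < t + 1 := by
      intro b
      have hsd := b.2.2
      rw [sdist, b.2.1, hV] at hsd
      have := hd b
      simp only [hf]
      omega
    rw [aux_card_fiber_sum f (t + 1) hflt]
    push_cast
    apply Finset.sum_congr rfl
    intro i hi
    rw [Finset.mem_range] at hi
    rcases le_or_gt i ℓ with hiℓ | hiℓ
    · have e : {b : B // f b = i} ≃ {U : Submodule K (Fin n → K) //
          Module.finrank K ↥U = ℓ ∧ Module.finrank K ↥(U ⊓ V) = ℓ - i} := by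
        refine ⟨fun x => ⟨x.1.1, x.1.2.1, ?_⟩, fun y => ⟨⟨y.1, y.2.1, ?_⟩, ?_⟩, ?_, ?_⟩
        · have h1 := hd x.1
          have h2 := x.2
          simp only [hf] at h2
          omega
        · rw [sdist, y.2.1, y.2.2, hV]
          push_cast [Nat.cast_sub hiℓ]
          omega
        · simp only [hf]
          omega
        · exact fun x => Subtype.ext (Subtype.ext rfl)
        · exact fun y => Subtype.ext rfl
      rw [Nat.card_congr e]
      exact aux_sphere_q hq hℓn hiℓ V hV
    · have he : IsEmpty {b : B // f b = i} := by
        constructor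
        rintro ⟨b, hbf⟩
        have := hd b
        simp only [hf] at hbf
        omega
      rw [Nat.card_of_isEmpty]
      have hg0 : gaussBinom q ℓ i = 0 := by
        apply Finset.prod_eq_zero (Finset.mem_range.2 hiℓ)
        rw [Nat.sub_self, pow_zero, sub_self, zero_div]
      rw [hg0]
      simp
end

section
/- Let L be a set of ℓ-dimensional subspaces of F_q^n forming a hybrid code capable of correcting D-1 dimension errors and d-1 symbol erasures. Then q^{ℓ(d-1)} · Σ_{i=0}^{(D-1)/2} q^{i²} [ℓ choose i]_q [(n-(d-1)-ℓ) choose i]_q · |L| ≤ [n choose ℓ]_q (sphere-packing bound for hybrid codes). -/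
noncomputable def deleteCoords {K : Type} [Field K] (n : ℕ) (S : Finset (Fin n)) :
    (Fin n → K) →ₗ[K] ({i : Fin n // i ∉ S} → K) :=
  LinearMap.funLeft K K (fun i => (i : Fin n))

/-!
Puncture the code on any `d - 1` coordinates: the images form a family of `ℓ`-dimensional
subspaces of `F_q^{n-d+1}` at pairwise subspace distance at least `2D`, so by the triangle
inequality for `sdist` the balls of radius `2T`, `T = ⌊(D-1)/2⌋`, around them are disjoint.
The ball around `V` contains, for every `i ≤ T`, the subspaces `A ⊔ graph φ`, where `A ≤ V` has
codimension `i`, `B` is an `i`-dimensional subspace of a fixed complement `C` of `V`, and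
`φ : B → A'` is linear for a complement `A'` of `A` in `V`. Since `A` and `B` are recovered as
`U ⊓ V` and `(U ⊔ V) ⊓ C`, these are `q^{i²}[ℓ, i]_q [n-d+1-ℓ, i]_q` distinct subspaces. Comparing
with the `[n-d+1, ℓ]_q` subspaces of dimension `ℓ` and using `q^{ℓ(d-1)}[n-d+1, ℓ]_q ≤ [n, ℓ]_q`
gives the bound.
-/

open Finset Module

section GaussBinom

variable {q : ℕ}

/-- `(q - 1)^k [k]_q!` -/
def qFact (q k : ℕ) : ℚ := ∏ j ∈ range k, ((q : ℚ) ^ (j + 1) - 1)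

lemma qFact_ne_zero (hq : q ≠ 1) (k : ℕ) : qFact q k ≠ 0 :=
  prod_ne_zero_iff.2 fun j _ => sub_ne_zero.2 (by exact_mod_cast mt Nat.pow_eq_one.1 (by omega))

lemma qFact_mul_prod_range (q : ℕ) {n k : ℕ} (hk : k ≤ n) :
    qFact q (n - k) * ∏ j ∈ range k, ((q : ℚ) ^ (n - j) - 1) = qFact q n := by
  induction k with
  | zero => simp
  | succ k ih =>
    obtain ⟨m, hm⟩ : ∃ m, n - k = m + 1 := ⟨n - k - 1, by omega⟩
    rw [prod_range_succ, ← ih (by omega), hm, show n - (k + 1) = m by omega, qFact, qFact,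
      prod_range_succ]
    ring

lemma gaussBinom_mul_qFact (hq : q ≠ 1) {n k : ℕ} (hk : k ≤ n) :
    gaussBinom q n k * (qFact q k * qFact q (n - k)) = qFact q n := by
  have hden : ∏ j ∈ range k, ((q : ℚ) ^ (k - j) - 1) = qFact q k := by
    simpa [qFact] using qFact_mul_prod_range q (le_refl k)
  rw [gaussBinom, prod_div_distrib, hden, ← qFact_mul_prod_range q hk]
  field_simp [qFact_ne_zero hq]

lemma gaussBinom_symm (hq : q ≠ 1) {n k : ℕ} (hk : k ≤ n) :
    gaussBinom q n (n - k) = gaussBinom q n k := by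
  refine mul_right_cancel₀ (mul_ne_zero (qFact_ne_zero hq k) (qFact_ne_zero hq (n - k))) ?_
  rw [gaussBinom_mul_qFact hq hk, mul_comm (qFact q k),
    ← gaussBinom_mul_qFact hq (Nat.sub_le n k), Nat.sub_sub_self hk]

lemma gaussBinom_eq_zero_of_lt {n k : ℕ} (h : n < k) : gaussBinom q n k = 0 :=
  prod_eq_zero (mem_range.2 h) (by simp)

lemma gaussBinom_mul_prod_pow_sub (hq : 1 < q) {t k : ℕ} (hk : k ≤ t) :
    gaussBinom q t k * ∏ j ∈ range k, ((q : ℚ) ^ k - q ^ j)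
      = ∏ j ∈ range k, ((q : ℚ) ^ t - q ^ j) := by
  have factor : ∀ s, ∀ j ≤ s, (q : ℚ) ^ s - q ^ j = q ^ j * (q ^ (s - j) - 1) := fun s j hj => by
    rw [mul_sub, ← pow_add, Nat.add_sub_cancel' hj, mul_one]
  rw [prod_congr rfl fun j hj => factor k j (mem_range.1 hj).le,
    prod_congr rfl fun j hj => factor t j (by have := mem_range.1 hj; omega),
    prod_mul_distrib, prod_mul_distrib, gaussBinom, prod_div_distrib]
  have hden : ∏ j ∈ range k, ((q : ℚ) ^ (k - j) - 1) ≠ 0 := prod_ne_zero_iff.2 fun j hj =>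
    sub_ne_zero.2 (by exact_mod_cast mt Nat.pow_eq_one.1 (by have := mem_range.1 hj; omega))
  field_simp

lemma pow_mul_gaussBinom_le (hq : 1 ≤ q) {ℓ m n : ℕ} (hℓm : ℓ ≤ m) (hmn : m ≤ n) :
    (q : ℚ) ^ (ℓ * (n - m)) * gaussBinom q m ℓ ≤ gaussBinom q n ℓ := by
  have hq : (1 : ℚ) ≤ q := by exact_mod_cast hq
  rw [gaussBinom, gaussBinom, mul_comm ℓ, pow_mul]
  nth_rw 1 [← card_range ℓ]
  rw [pow_card_mul_prod]
  have h1 : ∀ s, (0 : ℚ) ≤ q ^ s - 1 := fun s => sub_nonneg.2 (one_le_pow₀ hq)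
  refine prod_le_prod (fun i _ => by have := h1 (m - i); have := h1 (ℓ - i); positivity)
    fun i hi => ?_
  have hi := mem_range.1 hi
  rw [← mul_div_assoc]
  refine div_le_div_of_nonneg_right ?_ (h1 _)
  have hsplit : (q : ℚ) ^ (n - m) * q ^ (m - i) = q ^ (n - i) := by
    rw [← pow_add]; congr 1; omega
  nlinarith [one_le_pow₀ (n := n - m) hq]

end GaussBinom

section Count

open scoped Classical

variable {K : Type*} [Field K] [Fintype K] {M : Type*} [AddCommGroup M] [Module K M]

noncomputable instance [Finite M] : Fintype (Submodule K M) := Fintype.ofFinite _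

def linearIndependentSpanEquiv [FiniteDimensional K M] {k : ℕ} (p : Submodule K M)
    (hp : finrank K p = k) :
    {f : Fin k → M // LinearIndependent K f ∧ Submodule.span K (Set.range f) = p} ≃
      {g : Fin k → p // LinearIndependent K g} where
  toFun f := ⟨fun j => ⟨f.1 j, f.2.2.le (Submodule.subset_span ⟨j, rfl⟩)⟩,
    .of_comp p.subtype f.2.1⟩
  invFun g := ⟨p.subtype ∘ g.1, g.2.map' p.subtype p.ker_subtype, by
    have hind := g.2.map' p.subtype p.ker_subtype
    refine Submodule.eq_of_le_of_finrank_eq ?_ (by rw [finrank_span_eq_card hind, hp,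
      Fintype.card_fin])
    rw [Submodule.span_le]
    rintro _ ⟨j, rfl⟩
    exact (g.1 j).2⟩
  left_inv _ := rfl
  right_inv _ := rfl

theorem card_finrank_eq_mul_prod [Finite M] {k : ℕ} (hk : k ≤ finrank K M) :
    #{p : Submodule K M | finrank K p = k}
        * ∏ j ∈ range k, (Fintype.card K ^ k - Fintype.card K ^ j)
      = ∏ j ∈ range k, (Fintype.card K ^ finrank K M - Fintype.card K ^ j) := by
  have := Fintype.ofFinite M
  have hbases : ∀ p : Submodule K M, finrank K p = k →
      #{f : Fin k → M | LinearIndependent K f ∧ Submodule.span K (Set.range f) = p}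
        = ∏ j ∈ range k, (Fintype.card K ^ k - Fintype.card K ^ j) := fun p hp => by
    rw [← Fintype.card_subtype, ← Nat.card_eq_fintype_card,
      Nat.card_congr (linearIndependentSpanEquiv p hp), card_linearIndependent hp.ge, hp,
      Fin.prod_univ_eq_prod_range (fun j => Fintype.card K ^ k - Fintype.card K ^ j)]
  rw [← Fin.prod_univ_eq_prod_range (fun j => Fintype.card K ^ finrank K M - Fintype.card K ^ j),
    ← card_linearIndependent hk, Nat.card_eq_fintype_card, Fintype.card_subtype,
    card_eq_sum_card_fiberwise (f := fun f => Submodule.span K (Set.range f))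
      (t := {p : Submodule K M | finrank K p = k}) fun f hf => by
        simp only [coe_filter, mem_univ, true_and, Set.mem_ofPred_eq] at hf ⊢
        rw [finrank_span_eq_card hf, Fintype.card_fin],
    sum_congr rfl fun p hp => by rw [filter_filter, hbases p (mem_filter.1 hp).2],
    sum_const, smul_eq_mul]

theorem card_finrank_eq_gaussBinom [Finite M] (k : ℕ) :
    (#{p : Submodule K M | finrank K p = k} : ℚ) = gaussBinom (Fintype.card K) (finrank K M) k := by
  have hq : 1 < Fintype.card K := Fintype.one_lt_card
  rcases le_or_gt k (finrank K M) with hk | hk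
  · have hprod : ∏ j ∈ range k, ((Fintype.card K : ℚ) ^ k - Fintype.card K ^ j) ≠ 0 :=
      prod_ne_zero_iff.2 fun j hj => sub_ne_zero.2 <| by
        exact_mod_cast (Nat.pow_lt_pow_right hq (mem_range.1 hj)).ne'
    refine mul_right_cancel₀ hprod ?_
    rw [gaussBinom_mul_prod_pow_sub hq hk]
    have hcast : ∀ t ≥ k, ((∏ j ∈ range k, (Fintype.card K ^ t - Fintype.card K ^ j) : ℕ) : ℚ)
        = ∏ j ∈ range k, ((Fintype.card K : ℚ) ^ t - Fintype.card K ^ j) := fun t ht => by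
      rw [Nat.cast_prod]
      refine prod_congr rfl fun j hj => ?_
      rw [Nat.cast_sub (Nat.pow_le_pow_right hq.le (by have := mem_range.1 hj; omega))]
      push_cast
      rfl
    rw [← hcast k le_rfl, ← hcast _ hk]
    exact_mod_cast card_finrank_eq_mul_prod hk
  · rw [gaussBinom_eq_zero_of_lt hk, Nat.cast_eq_zero, card_eq_zero, filter_eq_empty_iff]
    exact fun p _ hp => (hp ▸ p.finrank_le).not_gt hk

theorem card_le_finrank_eq_gaussBinom [Finite M] (V : Submodule K M) (k : ℕ) :
    (#{p : Submodule K M | p ≤ V ∧ finrank K p = k} : ℚ)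
      = gaussBinom (Fintype.card K) (finrank K V) k := by
  rw [← card_finrank_eq_gaussBinom]
  congr 1
  refine card_nbij' (Submodule.comap V.subtype) (Submodule.map V.subtype) ?_ ?_ ?_ ?_
  · intro p hp
    simp only [coe_filter, mem_univ, true_and, Set.mem_ofPred_eq] at hp ⊢
    rw [(Submodule.comapSubtypeEquivOfLe hp.1).finrank_eq, hp.2]
  · intro p hp
    simp only [coe_filter, mem_univ, true_and, Set.mem_ofPred_eq] at hp ⊢
    exact ⟨Submodule.map_subtype_le _ _, by rw [Submodule.finrank_map_subtype_eq, hp]⟩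
  · intro p hp
    simp only [coe_filter, mem_univ, true_and, Set.mem_ofPred_eq] at hp
    rw [Submodule.map_comap_subtype, inf_eq_right.2 hp.1]
  · intro p _
    exact Submodule.comap_map_eq_of_injective V.injective_subtype p

end Count

section Graph

variable {K : Type*} [Field K] {W : Type*} [AddCommGroup W] [Module K W]
  {V C A A' B : Submodule K W}

lemma finrank_add_finrank_inf_of_isCompl [FiniteDimensional K W] {X : Submodule K W}
    (hAX : IsCompl A X) (hAV : A ≤ V) : finrank K A + finrank K ↥(X ⊓ V) = finrank K V := by
  have hsup : A ⊔ X ⊓ V = V := by rw [← sup_inf_assoc_of_le _ hAV, hAX.sup_eq_top, top_inf_eq]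
  have hdisj : A ⊓ (X ⊓ V) = ⊥ := (hAX.disjoint.mono_right inf_le_left).eq_bot
  have := Submodule.finrank_sup_add_finrank_inf_eq A (X ⊓ V)
  rwa [hsup, hdisj, finrank_bot, add_zero, eq_comm] at this

def graphMap (φ : B →ₗ[K] A') : B →ₗ[K] W := B.subtype + A'.subtype ∘ₗ φ

lemma graphMap_apply (φ : B →ₗ[K] A') (b : B) : graphMap φ b = (b : W) + φ b := rfl

variable (hVC : IsCompl V C) (hA'V : A' ≤ V) (hBC : B ≤ C)
include hVC hA'V hBC

lemma eq_zero_of_graphMap_mem {φ : B →ₗ[K] A'} {b : B} (h : graphMap φ b ∈ V) : b = 0 := by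
  have hbV : (b : W) ∈ V := by simpa [graphMap_apply] using V.sub_mem h (hA'V (φ b).2)
  exact Subtype.ext (Submodule.disjoint_def.1 hVC.disjoint _ hbV (hBC b.2))

lemma graphMap_injective (φ : B →ₗ[K] A') : Function.Injective (graphMap φ) :=
  (injective_iff_map_eq_zero _).2 fun _ hb =>
    eq_zero_of_graphMap_mem hVC hA'V hBC (hb ▸ V.zero_mem)

lemma range_graphMap_inf (φ : B →ₗ[K] A') : LinearMap.range (graphMap φ) ⊓ V = ⊥ := by
  refine eq_bot_iff.2 fun x ⟨⟨b, hb⟩, hxV⟩ => ?_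
  subst hb
  rw [eq_zero_of_graphMap_mem hVC hA'V hBC hxV, map_zero]
  exact zero_mem _

variable (hAV : A ≤ V)
include hAV

lemma graphSup_inf (φ : B →ₗ[K] A') : (A ⊔ LinearMap.range (graphMap φ)) ⊓ V = A := by
  rw [sup_inf_assoc_of_le _ hAV, range_graphMap_inf hVC hA'V hBC, sup_bot_eq]

lemma finrank_graphSup [FiniteDimensional K W] (φ : B →ₗ[K] A') :
    finrank K ↥(A ⊔ LinearMap.range (graphMap φ)) = finrank K A + finrank K B := by
  have h := Submodule.finrank_sup_add_finrank_inf_eq A (LinearMap.range (graphMap φ))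
  have hdisj : A ⊓ LinearMap.range (graphMap φ) = ⊥ := eq_bot_iff.2 <|
    (le_inf inf_le_right (inf_le_left.trans hAV)).trans (range_graphMap_inf hVC hA'V hBC φ).le
  rwa [hdisj, finrank_bot, add_zero,
    LinearMap.finrank_range_of_inj (graphMap_injective hVC hA'V hBC φ)] at h

lemma graphSup_sup_inf (φ : B →ₗ[K] A') :
    (A ⊔ LinearMap.range (graphMap φ) ⊔ V) ⊓ C = B := by
  have hsup : A ⊔ LinearMap.range (graphMap φ) ⊔ V = B ⊔ V := by
    rw [sup_right_comm, sup_eq_right.2 hAV, sup_comm]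
    refine le_antisymm (sup_le ?_ le_sup_right) (sup_le ?_ le_sup_right)
    · rintro _ ⟨b, rfl⟩
      exact Submodule.add_mem_sup b.2 (hA'V (φ b).2)
    · intro b hb
      have : (b : W) = graphMap φ ⟨b, hb⟩ + -(φ ⟨b, hb⟩ : W) := by
        rw [graphMap_apply]; abel
      rw [this]
      exact Submodule.add_mem_sup ⟨_, rfl⟩ (V.neg_mem (hA'V (φ _).2))
  rw [hsup, sup_inf_assoc_of_le _ hBC, hVC.inf_eq_bot, sup_bot_eq]

lemma graphSup_injective (hAA' : Disjoint A A') :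
    Function.Injective fun φ : B →ₗ[K] A' => A ⊔ LinearMap.range (graphMap φ) := by
  intro φ₁ φ₂ h
  ext b : 1
  have hmem : graphMap φ₁ b - graphMap φ₂ b ∈ A := by
    rw [← graphSup_inf hVC hA'V hBC hAV φ₂]
    refine ⟨Submodule.sub_mem _ ?_ (Submodule.mem_sup_right ⟨b, rfl⟩), ?_⟩
    · exact (congrArg (graphMap φ₁ b ∈ ·) h).mp (Submodule.mem_sup_right ⟨b, rfl⟩)
    · simpa [graphMap_apply] using V.sub_mem (hA'V (φ₁ b).2) (hA'V (φ₂ b).2)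
  have hdiff : ((φ₁ b : W) - φ₂ b) = 0 :=
    Submodule.disjoint_def.1 hAA' _ (by simpa [graphMap_apply] using hmem)
      (A'.sub_mem (φ₁ b).2 (φ₂ b).2)
  exact Subtype.ext (sub_eq_zero.1 hdiff)

end Graph

section Layers

open scoped Classical

variable {K : Type*} [Field K] [Fintype K] {W : Type*} [AddCommGroup W] [Module K W] [Finite W]

noncomputable instance {M N : Type*} [AddCommGroup M] [Module K M] [Finite M] [AddCommGroup N]
    [Module K N] [Finite N] : Fintype (M →ₗ[K] N) :=
  @Fintype.ofFinite _ (Module.finite_of_finite K)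

theorem card_image_graphSup {V C A A' B : Submodule K W} (hVC : IsCompl V C) (hA'V : A' ≤ V)
    (hBC : B ≤ C) (hAV : A ≤ V) (hAA' : Disjoint A A') :
    #(univ.image fun φ : B →ₗ[K] A' => A ⊔ LinearMap.range (graphMap φ))
      = Fintype.card K ^ (finrank K B * finrank K A') := by
  rw [card_image_of_injective _ (graphSup_injective hVC hA'V hBC hAV hAA'), card_univ,
    ← Nat.card_eq_fintype_card, Module.natCard_eq_pow_finrank (K := K),
    Module.finrank_linearMap, Nat.card_eq_fintype_card]

theorem card_mul_card_mul_pow_le_card_layer {V C : Submodule K W} (hVC : IsCompl V C) {i : ℕ}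
    (hi : i ≤ finrank K V) :
    #{A : Submodule K W | A ≤ V ∧ finrank K A = finrank K V - i}
        * #{B : Submodule K W | B ≤ C ∧ finrank K B = i} * Fintype.card K ^ (i * i)
      ≤ #{U : Submodule K W |
          finrank K U = finrank K V ∧ finrank K ↥(U ⊓ V) = finrank K V - i} := by
  choose Ac hAc using fun A : Submodule K W => Submodule.exists_isCompl A
  let graphs (p : Submodule K W × Submodule K W) : Finset (Submodule K W) :=
    univ.image fun φ : p.2 →ₗ[K] ↥(Ac p.1 ⊓ V) => p.1 ⊔ LinearMap.range (graphMap φ)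
  set PA := ({A : Submodule K W | A ≤ V ∧ finrank K A = finrank K V - i} : Finset _)
  set PB := ({B : Submodule K W | B ≤ C ∧ finrank K B = i} : Finset _)
  have hmem : ∀ p ∈ PA ×ˢ PB, (p.1 ≤ V ∧ finrank K p.1 = finrank K V - i) ∧
      p.2 ≤ C ∧ finrank K p.2 = i := fun p hp => by simpa [PA, PB] using hp
  calc #PA * #PB * Fintype.card K ^ (i * i)
      = ∑ p ∈ PA ×ˢ PB, #(graphs p) := by
        rw [← card_product, ← smul_eq_mul, ← sum_const]
        refine sum_congr rfl fun p hp => ?_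
        obtain ⟨⟨hAV, hA⟩, hBC, hB⟩ := hmem p hp
        rw [card_image_graphSup hVC inf_le_right hBC hAV ((hAc _).disjoint.mono_right inf_le_left),
          hB]
        have := finrank_add_finrank_inf_of_isCompl (hAc _) hAV
        congr 2
        omega
    _ = #((PA ×ˢ PB).biUnion graphs) := by
        refine (card_biUnion fun p hp p' hp' hpp' => disjoint_left.2 ?_).symm
        rintro U hU hU'
        obtain ⟨⟨hAV, -⟩, hBC, -⟩ := hmem p hp
        obtain ⟨⟨hAV', -⟩, hBC', -⟩ := hmem p' hp'
        obtain ⟨φ, -, rfl⟩ := mem_image.1 hU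
        obtain ⟨φ', -, hφφ'⟩ := mem_image.1 hU'
        refine hpp' (Prod.ext ?_ ?_)
        · rw [← graphSup_inf hVC inf_le_right hBC hAV φ, ← hφφ',
            graphSup_inf hVC inf_le_right hBC' hAV' φ']
        · rw [← graphSup_sup_inf hVC inf_le_right hBC hAV φ, ← hφφ',
            graphSup_sup_inf hVC inf_le_right hBC' hAV' φ']
    _ ≤ _ := by
        refine card_le_card (biUnion_subset.2 fun p hp U hU => ?_)
        obtain ⟨⟨hAV, hA⟩, hBC, hB⟩ := hmem p hp
        obtain ⟨φ, -, rfl⟩ := mem_image.1 hU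
        simp only [mem_filter, mem_univ, true_and]
        rw [finrank_graphSup hVC inf_le_right hBC hAV, graphSup_inf hVC inf_le_right hBC hAV, hA,
          hB]
        omega

end Layers

section Packing

variable {K : Type*} [Field K] {W : Type*} [AddCommGroup W] [Module K W]

lemma sdist_comm (U V : Submodule K W) : sdist U V = sdist V U := by
  rw [sdist, sdist, inf_comm, add_comm (finrank K U : ℤ)]

lemma sdist_triangle [FiniteDimensional K W] (U V X : Submodule K W) :
    sdist U V ≤ sdist U X + sdist X V := by
  have hsum := Submodule.finrank_sup_add_finrank_inf_eq (X ⊓ U) (X ⊓ V)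
  have hsup : finrank K ↥(X ⊓ U ⊔ X ⊓ V) ≤ finrank K X :=
    Submodule.finrank_mono (sup_le inf_le_left inf_le_left)
  have hinf : finrank K ↥(X ⊓ U ⊓ (X ⊓ V)) ≤ finrank K ↥(U ⊓ V) :=
    Submodule.finrank_mono (le_inf (inf_le_left.trans inf_le_right)
      (inf_le_right.trans inf_le_right))
  rw [sdist, sdist, sdist, inf_comm U X]
  omega

open scoped Classical

variable [Finite W]

noncomputable def subspaceBall (ℓ : ℕ) (V : Submodule K W) (r : ℤ) :
    Finset (Submodule K W) :=
  {U | finrank K U = ℓ ∧ sdist U V ≤ r}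

lemma disjoint_subspaceBall {ℓ : ℕ} {V₁ V₂ : Submodule K W} {r : ℤ}
    (h : r + r < sdist V₁ V₂) : Disjoint (subspaceBall ℓ V₁ r) (subspaceBall ℓ V₂ r) := by
  refine disjoint_left.2 fun U hU₁ hU₂ => ?_
  simp only [subspaceBall, mem_filter, mem_univ, true_and] at hU₁ hU₂
  have := sdist_triangle V₁ V₂ U
  rw [sdist_comm V₁ U] at this
  omega

variable [Fintype K]

theorem sum_le_card_subspaceBall {ℓ : ℕ} {V : Submodule K W} (hV : finrank K V = ℓ) (T : ℕ) :
    ∑ i ∈ range (T + 1), (Fintype.card K : ℚ) ^ (i ^ 2) * gaussBinom (Fintype.card K) ℓ i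
        * gaussBinom (Fintype.card K) (finrank K W - ℓ) i
      ≤ #(subspaceBall ℓ V (2 * T)) := by
  have hq : 1 < Fintype.card K := Fintype.one_lt_card
  obtain ⟨C, hVC⟩ := Submodule.exists_isCompl V
  have hC : finrank K C = finrank K W - ℓ := by
    have := Submodule.finrank_add_eq_of_isCompl hVC
    omega
  let layer (i : ℕ) : Finset (Submodule K W) :=
    {U | finrank K U = ℓ ∧ finrank K ↥(U ⊓ V) = ℓ - i}
  -- the layers `i > ℓ` all coincide with layer `ℓ`, but their terms vanish
  rw [← sum_filter_of_ne (p := (· ≤ ℓ)) fun i _ h =>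
    not_lt.1 fun hi => h (by simp [gaussBinom_eq_zero_of_lt hi])]
  calc _ ≤ ∑ i ∈ range (T + 1) with i ≤ ℓ, (#(layer i) : ℚ) := by
        refine sum_le_sum fun i hi => ?_
        have hi := (mem_filter.1 hi).2
        have := card_mul_card_mul_pow_le_card_layer hVC (hV ▸ hi)
        rw [← @Nat.cast_le ℚ] at this
        push_cast at this
        rw [card_le_finrank_eq_gaussBinom, card_le_finrank_eq_gaussBinom, hC, hV,
          gaussBinom_symm hq.ne' hi, ← sq] at this
        exact (le_of_eq (by ring)).trans this
    _ = #((range (T + 1)).filter (· ≤ ℓ) |>.biUnion layer) := by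
        rw [card_biUnion]
        · push_cast; rfl
        intro i hi j hj hij
        refine disjoint_left.2 fun U hUi hUj => hij ?_
        simp only [coe_filter, mem_range, Set.mem_ofPred_eq, layer, mem_filter, mem_univ,
          true_and] at hi hj hUi hUj
        omega
    _ ≤ _ := by
        refine Nat.cast_le.2 (card_le_card (biUnion_subset.2 fun i hi U hU => ?_))
        simp only [mem_filter, mem_range, layer, mem_univ, true_and] at hi hU
        simp only [subspaceBall, mem_filter, mem_univ, true_and]
        rw [sdist, hV]
        omega

theorem sum_mul_card_le_gaussBinom {ι : Type*} {ℓ : ℕ} (L : Finset ι) (f : ι → Submodule K W)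
    (hdim : ∀ a ∈ L, finrank K (f a) = ℓ) (T : ℕ)
    (hdist : ∀ a ∈ L, ∀ b ∈ L, a ≠ b → 4 * T < sdist (f a) (f b)) :
    (∑ i ∈ range (T + 1), (Fintype.card K : ℚ) ^ (i ^ 2) * gaussBinom (Fintype.card K) ℓ i
        * gaussBinom (Fintype.card K) (finrank K W - ℓ) i) * #L
      ≤ gaussBinom (Fintype.card K) (finrank K W) ℓ := by
  calc _ = ∑ a ∈ L, ∑ i ∈ range (T + 1), (Fintype.card K : ℚ) ^ (i ^ 2)
          * gaussBinom (Fintype.card K) ℓ i * gaussBinom (Fintype.card K) (finrank K W - ℓ) i := by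
        rw [sum_const, nsmul_eq_mul, mul_comm]
    _ ≤ ∑ a ∈ L, (#(subspaceBall ℓ (f a) (2 * T)) : ℚ) :=
        sum_le_sum fun a ha => sum_le_card_subspaceBall (hdim a ha) T
    _ = #(L.biUnion fun a => subspaceBall ℓ (f a) (2 * T)) := by
        rw [card_biUnion fun a ha b hb hab => disjoint_subspaceBall (by
          have := hdist a ha b hb hab; omega)]
        push_cast; rfl
    _ ≤ #{U : Submodule K W | finrank K U = ℓ} := by
        refine Nat.cast_le.2 (card_le_card (biUnion_subset.2 fun a _ U hU => ?_))
        simp only [subspaceBall, mem_filter, mem_univ, true_and] at hU ⊢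
        exact hU.1
    _ = _ := card_finrank_eq_gaussBinom ℓ

end Packing

theorem hybrid_sphere_packing_bound_general {q n ℓ D d : ℕ} {K : Type} [Field K] [Fintype K]
    (hq : Fintype.card K = q) (hD : 1 ≤ D) (hn : ℓ + (d - 1) ≤ n)
    (L : Finset (Submodule K (Fin n → K)))
    (herase : ∀ S : Finset (Fin n), S.card = d - 1 →
      Set.InjOn (fun V : Submodule K (Fin n → K) => V.map (deleteCoords n S))
        (L : Set (Submodule K (Fin n → K))) ∧
      (∀ V ∈ L, Module.finrank K ↥(V.map (deleteCoords n S)) = ℓ) ∧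
      (∀ U ∈ L, ∀ V ∈ L, U ≠ V →
        (2 * D : ℤ) ≤ sdist (U.map (deleteCoords n S)) (V.map (deleteCoords n S)))) :
    (q : ℚ) ^ (ℓ * (d - 1)) *
      (∑ i ∈ Finset.range ((D - 1) / 2 + 1),
        (q : ℚ) ^ (i ^ 2) * gaussBinom q ℓ i * gaussBinom q (n - (d - 1) - ℓ) i) *
      (L.card : ℚ) ≤ gaussBinom q n ℓ := by
  subst hq
  obtain ⟨S, -, hS⟩ := exists_subset_card_eq (s := (univ : Finset (Fin n))) (n := d - 1)
    (by rw [card_univ, Fintype.card_fin]; omega)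
  obtain ⟨-, hdimS, hdistS⟩ := herase S hS
  have hrank : finrank K ({i : Fin n // i ∉ S} → K) = n - (d - 1) := by
    rw [finrank_fintype_fun_eq_card, Fintype.card_subtype_compl, Fintype.card_fin,
      Fintype.card_coe, hS]
  have hpunctured := sum_mul_card_le_gaussBinom (W := {i : Fin n // i ∉ S} → K) L
    (fun V => V.map (deleteCoords n S)) hdimS ((D - 1) / 2) fun U hU V hV hUV => by
      have := hdistS U hU V hV hUV; omega
  have hlift := pow_mul_gaussBinom_le (q := Fintype.card K) Fintype.card_pos (ℓ := ℓ)
    (m := n - (d - 1)) (n := n) (by omega) (Nat.sub_le n (d - 1))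
  rw [hrank] at hpunctured
  rw [Nat.sub_sub_self (by omega)] at hlift
  rw [mul_assoc]
  exact (mul_le_mul_of_nonneg_left hpunctured (by positivity)).trans hlift

/-- The sphere-packing bound for hybrid codes correcting `D-1` dimension errors and
`d-1` symbol erasures:
`q^{ℓ(d-1)} · Σ_{i=0}^{(D-1)/2} q^{i²}[ℓ choose i]_q[n-(d-1)-ℓ choose i]_q · |L|
  ≤ [n choose ℓ]_q`. -/
theorem hybrid_sphere_packing_bound {q n ℓ D d : ℕ} {K : Type} [Field K] [Fintype K]
    (hq : Fintype.card K = q) (hd : 1 ≤ d) (hD : 1 ≤ D) (hn : ℓ + (d - 1) ≤ n)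
    (L : Finset (Submodule K (Fin n → K)))
    (hdim : ∀ V ∈ L, Module.finrank K ↥V = ℓ)
    (hdist : ∀ U ∈ L, ∀ V ∈ L, U ≠ V → (2 * D : ℤ) ≤ sdist U V)
    (herase : ∀ S : Finset (Fin n), S.card = d - 1 →
      Set.InjOn (fun V : Submodule K (Fin n → K) => V.map (deleteCoords n S))
        (L : Set (Submodule K (Fin n → K))) ∧
      (∀ V ∈ L, Module.finrank K ↥(V.map (deleteCoords n S)) = ℓ) ∧
      (∀ U ∈ L, ∀ V ∈ L, U ≠ V →
        (2 * D : ℤ) ≤ sdist (U.map (deleteCoords n S)) (V.map (deleteCoords n S)))) :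
    (q : ℚ) ^ (ℓ * (d - 1)) *
      (∑ i ∈ Finset.range ((D - 1) / 2 + 1),
        (q : ℚ) ^ (i ^ 2) * gaussBinom q ℓ i * gaussBinom q (n - (d - 1) - ℓ) i) *
      (L.card : ℚ) ≤ gaussBinom q n ℓ :=
  hybrid_sphere_packing_bound_general hq hD hn L herase
end

section
/- Let B be a set of ℓ-dimensional subspaces of F_q^{ℓ+m} with pairwise subspace distance ≥ 2D, let G be an (ℓ+m)×n generator matrix of an [n, ℓ+m, d] linear MDS code C over F_q (with n = ℓ+m+d-1), and let E(V) = {vG : v ∈ V}. Then L = {E(V) : V ∈ B} is a set of ℓ-dimensional subspaces of F_q^n with |L| = |B|, pairwise subspace distance ≥ 2D, and such that deleting any d-1 coordinates acts injectively on L, preserves dimension ℓ, and preserves pairwise subspace distance ≥ 2D. -/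
/-!
An injective linear map `f` preserves dimensions and, since `map f` commutes with `⊓`, subspace
distances. `v ↦ vG` is injective; and as every nonzero codeword has weight at least `d`, deleting
`d - 1` coordinates kills none of them, so `v ↦ vG` followed by the deletion is injective too.
-/

section InjectiveMap

variable {K W W' : Type*} [Field K] [AddCommGroup W] [Module K W] [AddCommGroup W'] [Module K W']
  {f : W →ₗ[K] W'}

lemma finrank_map_of_injective (hf : Function.Injective f) (A : Submodule K W) :
    Module.finrank K (A.map f) = Module.finrank K A :=
  (Submodule.equivMapOfInjective f hf A).symm.finrank_eq

lemma sdist_map_of_injective (hf : Function.Injective f) (A B : Submodule K W) :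
    sdist (A.map f) (B.map f) = sdist A B := by
  unfold sdist
  rw [← Submodule.map_inf _ hf, finrank_map_of_injective hf, finrank_map_of_injective hf,
    finrank_map_of_injective hf]

lemma subspaceCode_map_of_injective [DecidableEq (Submodule K W')] {ℓ D : ℕ}
    (B : Finset (Submodule K W)) (hBdim : ∀ V ∈ B, Module.finrank K V = ℓ)
    (hBdist : ∀ U ∈ B, ∀ V ∈ B, U ≠ V → (2 * D : ℤ) ≤ sdist U V)
    (hf : Function.Injective f) :
    (B.image fun V => V.map f).card = B.card ∧
    (∀ V ∈ B, Module.finrank K (V.map f) = ℓ) ∧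
    (∀ U ∈ B, ∀ V ∈ B, U ≠ V → (2 * D : ℤ) ≤ sdist (U.map f) (V.map f)) :=
  ⟨Finset.card_image_of_injective B (Submodule.map_injective_of_injective hf),
    fun V hV => (finrank_map_of_injective hf V).trans (hBdim V hV),
    fun U hU V hV hUV => (sdist_map_of_injective hf U V).symm ▸ hBdist U hU V hV hUV⟩

end InjectiveMap

section DeleteCoords

variable {K : Type} [Field K] {n : ℕ}

lemma support_subset_of_deleteCoords_eq_zero [DecidableEq K] {S : Finset (Fin n)}
    {w : Fin n → K} (hw : deleteCoords n S w = 0) :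
    (Finset.univ.filter fun i => w i ≠ 0) ⊆ S := by
  intro i hi
  by_contra hiS
  exact (Finset.mem_filter.mp hi).2 (congr_fun hw ⟨i, hiS⟩)

lemma injective_deleteCoords_comp [DecidableEq K] {V : Type*} [AddCommGroup V] [Module K V]
    {d : ℕ} (f : V →ₗ[K] Fin n → K)
    (hf : ∀ v, v ≠ 0 → d ≤ (Finset.univ.filter fun i => f v i ≠ 0).card)
    {S : Finset (Fin n)} (hS : S.card < d) :
    Function.Injective (deleteCoords n S ∘ₗ f) := by
  rw [injective_iff_map_eq_zero]
  intro v (hv : deleteCoords n S (f v) = 0)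
  by_contra hv0
  have hsupp := Finset.card_le_card (support_subset_of_deleteCoords_eq_zero hv)
  have hweight := hf v hv0
  omega

end DeleteCoords

theorem concatenated_hybrid_code_general {ℓ m d D n : ℕ} {K : Type} [Field K]
    [DecidableEq K] [DecidableEq (Submodule K (Fin n → K))] (hd : 1 ≤ d)
    (B : Finset (Submodule K (Fin (ℓ + m) → K)))
    (hBdim : ∀ V ∈ B, Module.finrank K ↥V = ℓ)
    (hBdist : ∀ U ∈ B, ∀ V ∈ B, U ≠ V → (2 * D : ℤ) ≤ sdist U V)
    (G : Matrix (Fin (ℓ + m)) (Fin n) K)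
    (hG : Function.Injective G.vecMulLinear)
    (hGd : ∀ v : Fin (ℓ + m) → K, v ≠ 0 →
      d ≤ (Finset.univ.filter fun i => G.vecMulLinear v i ≠ 0).card) :
    (B.image fun V => V.map G.vecMulLinear).card = B.card ∧
    (∀ V ∈ B, Module.finrank K ↥(V.map G.vecMulLinear) = ℓ) ∧
    (∀ U ∈ B, ∀ V ∈ B, U ≠ V →
      (2 * D : ℤ) ≤ sdist (U.map G.vecMulLinear) (V.map G.vecMulLinear)) ∧
    (∀ S : Finset (Fin n), S.card = d - 1 →
      Set.InjOn (fun V : Submodule K (Fin n → K) => V.map (deleteCoords n S))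
        ((B.image fun V => V.map G.vecMulLinear) : Set (Submodule K (Fin n → K))) ∧
      (∀ V ∈ B, Module.finrank K
          ↥((V.map G.vecMulLinear).map (deleteCoords n S)) = ℓ) ∧
      (∀ U ∈ B, ∀ V ∈ B, U ≠ V →
        (2 * D : ℤ) ≤ sdist ((U.map G.vecMulLinear).map (deleteCoords n S))
          ((V.map G.vecMulLinear).map (deleteCoords n S)))) := by
  obtain ⟨hcard, hdim, hdist⟩ := subspaceCode_map_of_injective B hBdim hBdist hG
  refine ⟨hcard, hdim, hdist, fun S hS => ?_⟩
  have hdel := injective_deleteCoords_comp _ hGd (S := S) (by omega)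
  have hcomp (V : Submodule K (Fin (ℓ + m) → K)) :
      (V.map G.vecMulLinear).map (deleteCoords n S) = V.map (deleteCoords n S ∘ₗ G.vecMulLinear) :=
    (Submodule.map_comp _ _ V).symm
  obtain ⟨-, hdim', hdist'⟩ := subspaceCode_map_of_injective B hBdim hBdist hdel
  refine ⟨?_, fun V hV => hcomp V ▸ hdim' V hV,
    fun U hU V hV hUV => hcomp U ▸ hcomp V ▸ hdist' U hU V hV hUV⟩
  rintro _ hU _ hV hUV
  obtain ⟨U, -, rfl⟩ := Finset.mem_image.mp hU
  obtain ⟨V, -, rfl⟩ := Finset.mem_image.mp hV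
  dsimp only at hUV
  rw [hcomp, hcomp] at hUV
  rw [Submodule.map_injective_of_injective hdel hUV]

/-- Concatenating a subspace code `B` (of `ℓ`-dimensional subspaces of `F_q^{ℓ+m}` with
pairwise subspace distance `≥ 2D`) with an `[n, ℓ+m, d]` linear code via its generator
matrix `G` (through `E(V) = {vG : v ∈ V}`) yields a hybrid code: same size, dimension `ℓ`,
pairwise distance `≥ 2D`, and deleting any `d-1` coordinates is injective on the code,
preserves dimension `ℓ`, and preserves pairwise distance `≥ 2D`. -/
theorem concatenated_hybrid_code {q ℓ m d D n : ℕ} {K : Type} [Field K] [Fintype K]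
    [DecidableEq K] [DecidableEq (Submodule K (Fin n → K))] (hq : Fintype.card K = q) (hn : n = ℓ + m + d - 1) (hd : 1 ≤ d)
    (B : Finset (Submodule K (Fin (ℓ + m) → K)))
    (hBdim : ∀ V ∈ B, Module.finrank K ↥V = ℓ)
    (hBdist : ∀ U ∈ B, ∀ V ∈ B, U ≠ V → (2 * D : ℤ) ≤ sdist U V)
    (G : Matrix (Fin (ℓ + m)) (Fin n) K)
    (hG : Function.Injective G.vecMulLinear)
    (hGd : ∀ v : Fin (ℓ + m) → K, v ≠ 0 →
      d ≤ (Finset.univ.filter fun i => G.vecMulLinear v i ≠ 0).card) :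
    (B.image fun V => V.map G.vecMulLinear).card = B.card ∧
    (∀ V ∈ B, Module.finrank K ↥(V.map G.vecMulLinear) = ℓ) ∧
    (∀ U ∈ B, ∀ V ∈ B, U ≠ V →
      (2 * D : ℤ) ≤ sdist (U.map G.vecMulLinear) (V.map G.vecMulLinear)) ∧
    (∀ S : Finset (Fin n), S.card = d - 1 →
      Set.InjOn (fun V : Submodule K (Fin n → K) => V.map (deleteCoords n S))
        ((B.image fun V => V.map G.vecMulLinear) : Set (Submodule K (Fin n → K))) ∧
      (∀ V ∈ B, Module.finrank K
          ↥((V.map G.vecMulLinear).map (deleteCoords n S)) = ℓ) ∧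
      (∀ U ∈ B, ∀ V ∈ B, U ≠ V →
        (2 * D : ℤ) ≤ sdist ((U.map G.vecMulLinear).map (deleteCoords n S))
          ((V.map G.vecMulLinear).map (deleteCoords n S)))) :=
  concatenated_hybrid_code_general hd B hBdim hBdist G hG hGd
end
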